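/- Let n ≥ 2, β ∈ ℝ, and let J assign a real coupling J_{(v,k)} to each edge (v,k) of the periodic lattice. Suppose that for each edge (v,k) there is a finite type A and a map R^{(v,k)} : {−1,1} → A → ℝ with e^{β·J_{(v,k)}·s·s'} = Σ_{a∈A} R^{(v,k)}(s,a)·R^{(v,k)}(s',a) for all s, s' ∈ {−1,1}. Define the site-dependent vertex tensor T^v(a,b,c,d) = Σ_{s∈{−1,1}} R^{(v−e₁,1)}(s,a)·R^{(v,1)}(s,b)·R^{(v−e₂,2)}(s,c)·R^{(v,2)}(s,d). Then Σ_{x : V×{1,2} → A} Π_{v∈V} T^v(x(v−e₁,1), x(v,1), x(v−e₂,2), x(v,2)) = Z_{N,J}(β), the partition function of the 2D Edwards–Anderson model with couplings J. -/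

import Mathlib

open Finset

/-- The spin values `{-1, 1}` as a (finite) subtype of `ℝ`. -/
abbrev Spin : Type := ({-1, 1} : Finset ℝ)

/-- Vertices of the 2D periodic `n × n` lattice. -/
abbrev V2 (n : ℕ) := ZMod n × ZMod n

/-- The 2D Edwards–Anderson energy with edge couplings `J`:
`H_{N,J}(σ) = −Σ_v (J_{(v,1)} σ_v σ_{v+e₁} + J_{(v,2)} σ_v σ_{v+e₂})`. -/
noncomputable def H2J (n : ℕ) [NeZero n] (J : V2 n × Fin 2 → ℝ) (σ : V2 n → Spin) : ℝ :=
  -∑ v : V2 n, (J (v, 0) * (σ v : ℝ) * (σ (v + (1, 0)) : ℝ)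
    + J (v, 1) * (σ v : ℝ) * (σ (v + (0, 1)) : ℝ))

/-! Expanding each vertex sum over spins turns the network into a sum over spin configurations
`σ` of a sum over bond indices `x`. For fixed `σ`, translating the incoming factors
`R^{(v-e_k,k)}` from `v` to `v - e_k` regroups the vertex product edge by edge, each edge
`(v,k)` contributing `R^{(v,k)}(σ_v, x) R^{(v,k)}(σ_{v+e_k}, x)`; the sum over `x` then
factorises over edges, and the splitting hypothesis turns every edge factor back into the
Boltzmann weight `exp(β J_{(v,k)} σ_v σ_{v+e_k})`. -/

theorem Fintype.prod_comp_sub_right {G M : Type*} [AddGroup G] [Fintype G] [CommMonoid M]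
    (c : G) (f : G → G → M) : ∏ v, f (v - c) v = ∏ v, f v (v + c) := by
  simpa only [Equiv.subRight_apply, sub_add_cancel] using
    (Equiv.subRight c).prod_comp fun w => f w (w + c)

section TranslationInvariantNetwork

variable {G K S A R : Type*} [AddCommGroup G] [Fintype G] [Fintype K] [CommSemiring R]

theorem prod_vertexFactors_eq_prod_edgeFactors (e : K → G) (W : G × K → S → A → R)
    (σ : G → S) (x : G × K → A) :
    ∏ v, ∏ k, W (v - e k, k) (σ v) (x (v - e k, k)) * W (v, k) (σ v) (x (v, k))
      = ∏ ed : G × K, W ed (σ ed.1) (x ed) * W ed (σ (ed.1 + e ed.2)) (x ed) := by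
  rw [Finset.prod_comm, Fintype.prod_prod_type_right]
  refine Fintype.prod_congr _ _ fun k => ?_
  rw [Finset.prod_mul_distrib, Finset.prod_mul_distrib, mul_comm,
    Fintype.prod_comp_sub_right (e k) fun u v => W (u, k) (σ v) (x (u, k))]

theorem sum_prod_vertexTensor_eq_sum_prod_edgeWeight [DecidableEq G] [DecidableEq K]
    [Fintype S] [Fintype A] (e : K → G) (W : G × K → S → A → R) :
    ∑ x : G × K → A, ∏ v, ∑ s, ∏ k, W (v - e k, k) s (x (v - e k, k)) * W (v, k) s (x (v, k))
      = ∑ σ : G → S, ∏ ed : G × K, ∑ a, W ed (σ ed.1) a * W ed (σ (ed.1 + e ed.2)) a := by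
  simp_rw [Fintype.prod_sum]
  rw [Finset.sum_comm]
  exact Fintype.sum_congr _ _ fun σ => Fintype.sum_congr _ _ fun x =>
    prod_vertexFactors_eq_prod_edgeFactors e W σ x

end TranslationInvariantNetwork

theorem neg_mul_H2J_eq_sum_edges (n : ℕ) [NeZero n] (β : ℝ) (J : V2 n × Fin 2 → ℝ)
    (σ : V2 n → Spin) :
    -β * H2J n J σ = ∑ ed : V2 n × Fin 2,
      β * J ed * (σ ed.1 : ℝ) * (σ (ed.1 + ![(1, 0), (0, 1)] ed.2) : ℝ) := by
  rw [Fintype.sum_prod_type]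
  simp only [H2J, Fin.sum_univ_two, Matrix.cons_val_zero, Matrix.cons_val_one, neg_mul_neg,
    Finset.mul_sum]
  exact Fintype.sum_congr _ _ fun v => by ring

theorem edwardsAnderson_network_eq_partitionFunction_general
    (n : ℕ) [NeZero n] (β : ℝ)
    (J : V2 n × Fin 2 → ℝ)
    (A : Type) [Fintype A] (R : V2 n × Fin 2 → Spin → A → ℝ)
    (hR : ∀ (ed : V2 n × Fin 2) (s s' : Spin),
      Real.exp (β * J ed * (s : ℝ) * (s' : ℝ)) = ∑ a : A, R ed s a * R ed s' a) :
    ∑ x : V2 n × Fin 2 → A, ∏ v : V2 n,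
        (∑ s : Spin, R (v - (1, 0), 0) s (x (v - (1, 0), 0)) * R (v, 0) s (x (v, 0)) *
          R (v - (0, 1), 1) s (x (v - (0, 1), 1)) * R (v, 1) s (x (v, 1)))
      = ∑ σ : V2 n → Spin, Real.exp (-β * H2J n J σ) := by
  have vertexTensor : ∀ (x : V2 n × Fin 2 → A) (v : V2 n) (s : Spin),
      R (v - (1, 0), 0) s (x (v - (1, 0), 0)) * R (v, 0) s (x (v, 0)) *
          R (v - (0, 1), 1) s (x (v - (0, 1), 1)) * R (v, 1) s (x (v, 1))
        = ∏ k, R (v - ![(1, 0), (0, 1)] k, k) s (x (v - ![(1, 0), (0, 1)] k, k)) *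
            R (v, k) s (x (v, k)) := by
    intro x v s
    simp only [Fin.prod_univ_two, Matrix.cons_val_zero, Matrix.cons_val_one]
    ring
  simp_rw [vertexTensor, sum_prod_vertexTensor_eq_sum_prod_edgeWeight, ← hR, ← Real.exp_sum,
    neg_mul_H2J_eq_sum_edges]

/-- If for each edge `ed` the map `R ed` splits the edge Boltzmann weight
`e^{β J_{ed} s s'} = Σ_a R^{ed}(s,a) R^{ed}(s',a)`, then the contraction of the tensor
network built from the site-dependent vertex tensors
`T^v(a,b,c,d) = Σ_s R^{(v−e₁,1)}(s,a) R^{(v,1)}(s,b) R^{(v−e₂,2)}(s,c) R^{(v,2)}(s,d)`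
equals the Edwards–Anderson partition function `Z_{N,J}(β)`. -/
theorem edwardsAnderson_network_eq_partitionFunction
    (n : ℕ) [NeZero n] (hn : 2 ≤ n) (β : ℝ)
    (J : V2 n × Fin 2 → ℝ)
    (A : Type) [Fintype A] (R : V2 n × Fin 2 → Spin → A → ℝ)
    (hR : ∀ (ed : V2 n × Fin 2) (s s' : Spin),
      Real.exp (β * J ed * (s : ℝ) * (s' : ℝ)) = ∑ a : A, R ed s a * R ed s' a) :
    ∑ x : V2 n × Fin 2 → A, ∏ v : V2 n,
        (∑ s : Spin, R (v - (1, 0), 0) s (x (v - (1, 0), 0)) * R (v, 0) s (x (v, 0)) *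
          R (v - (0, 1), 1) s (x (v - (0, 1), 1)) * R (v, 1) s (x (v, 1)))
      = ∑ σ : V2 n → Spin, Real.exp (-β * H2J n J σ) :=
  edwardsAnderson_network_eq_partitionFunction_general n β J A R hR
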